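/- Let 0 < α < 1. If f is q-absolutely continuous on A*_{q,a}, and g is bounded on A*_{q,a} with D^α_{q,a^-} g ∈ L¹_q(A*_{q,a}), then ∫_0^a g(x) ᶜD^α_{q,0^+} f(x) d_q x = (I^{1−α}_{q,a^-}g)(x/q) f(x)|_{x=0}^a + ∫_0^a f(x) D^α_{q,a^-} g(x) d_q x. -/

import Mathlib

open Filter

noncomputable section

namespace QFrac

variable (q : ℝ)

/-- infinite q-shifted factorial `(z;q)_∞` -/
def pochInf (z : ℝ) : ℝ := ∏' n : ℕ, (1 - z * q ^ n)

/-- generalized q-shifted factorial `(z;q)_ν = (z;q)_∞ / (z q^ν;q)_∞` -/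
def poch (z ν : ℝ) : ℝ := pochInf q z / pochInf q (z * q ^ ν)

/-- finite q-shifted factorial `(z;q)_k` -/
def pochN (z : ℝ) (k : ℕ) : ℝ := ∏ i ∈ Finset.range k, (1 - z * q ^ i)

/-- q-Gamma function -/
def qGamma (α : ℝ) : ℝ := pochInf q q / pochInf q (q ^ α) * (1 - q) ^ (1 - α)

/-- Jackson q-integral `∫_0^a f(t) d_q t` -/
def jackson (a : ℝ) (f : ℝ → ℝ) : ℝ := (1 - q) * a * ∑' n : ℕ, q ^ n * f (a * q ^ n)

/-- Jackson q-integral `∫_c^b f(t) d_q t` -/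
def jacksonI (c b : ℝ) (f : ℝ → ℝ) : ℝ := jackson q b f - jackson q c f

/-- left-sided Riemann–Liouville q-fractional integral `I^α_{q,0^+}` -/
def Ileft (α : ℝ) (f : ℝ → ℝ) (x : ℝ) : ℝ :=
  x ^ (α - 1) / qGamma q α * jackson q x (fun t => poch q (q * t / x) (α - 1) * f t)

/-- right-sided Riemann–Liouville q-fractional integral `I^α_{q,b^-}` -/
def Iright (b α : ℝ) (f : ℝ → ℝ) (x : ℝ) : ℝ :=
  (qGamma q α)⁻¹ *
    jacksonI q (q * x) b (fun t => t ^ (α - 1) * poch q (q * x / t) (α - 1) * f t)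

/-- Jackson q-derivative -/
def Dq (f : ℝ → ℝ) (x : ℝ) : ℝ := (f x - f (q * x)) / ((1 - q) * x)

/-- Jackson `q⁻¹`-derivative -/
def Dqinv (f : ℝ → ℝ) (x : ℝ) : ℝ := (f x - f (x / q)) / ((1 - q⁻¹) * x)

/-- left-sided Caputo q-fractional derivative of order `α ∈ (0,1)` -/
def CDleft (α : ℝ) (f : ℝ → ℝ) : ℝ → ℝ := Ileft q (1 - α) (Dq q f)

/-- left-sided Riemann–Liouville q-fractional derivative of order `α ∈ (0,1)` -/
def DRLleft (α : ℝ) (f : ℝ → ℝ) : ℝ → ℝ := Dq q (Ileft q (1 - α) f)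

/-- right-sided Riemann–Liouville q-fractional derivative of order `α ∈ (0,1)` -/
def DRLright (b α : ℝ) (f : ℝ → ℝ) (x : ℝ) : ℝ :=
  (-1 / q) * Dqinv q (fun t => Iright q b (1 - α) f t) x

/-- right-sided Caputo q-fractional derivative of order `α ∈ (0,1)` -/
def CDright (b α : ℝ) (f : ℝ → ℝ) (x : ℝ) : ℝ :=
  (-1 / q) * Iright q b (1 - α) (Dqinv q f) x

/-- `f ∈ L¹_q(A^*_{q,a})` -/
def MemL1 (a : ℝ) (f : ℝ → ℝ) : Prop := Summable (fun n : ℕ => q ^ n * |f (a * q ^ n)|)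

/-- `f ∈ L²_q(A^*_{q,a})` -/
def MemL2 (a : ℝ) (f : ℝ → ℝ) : Prop := Summable (fun n : ℕ => q ^ n * (f (a * q ^ n)) ^ 2)

/-- the `L²_q` norm -/
def norm2 (a : ℝ) (f : ℝ → ℝ) : ℝ := Real.sqrt (jackson q a (fun t => (f t) ^ 2))

/-- `f` is q-regular at zero (its value at `0` is the limit along the q-grid) -/
def qRegular (a : ℝ) (f : ℝ → ℝ) : Prop :=
  Tendsto (fun n : ℕ => f (a * q ^ n)) atTop (nhds (f 0))

/-- the limit at zero along the q-grid exists -/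
def qRegular' (a : ℝ) (f : ℝ → ℝ) : Prop :=
  ∃ L : ℝ, Tendsto (fun n : ℕ => f (a * q ^ n)) atTop (nhds L)

/-- sup norm on `A^*_{q,a}` -/
def supNorm (a : ℝ) (f : ℝ → ℝ) : ℝ := max (⨆ n : ℕ, |f (a * q ^ n)|) |f 0|

/-- bounded q-variation part of q-absolute continuity -/
def qACvar (a : ℝ) (f : ℝ → ℝ) : Prop :=
  ∃ K : ℝ, ∀ m N : ℕ,
    ∑ j ∈ Finset.range N, |f (a * q ^ (m + j)) - f (a * q ^ (m + j + 1))| ≤ K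

/-- q-absolute continuity on `A^*_{q,a}` -/
def qAC (a : ℝ) (f : ℝ → ℝ) : Prop := qRegular q a f ∧ qACvar q a f

/-- little q-Jacobi polynomial `p_n(x; q^A, q^B | q)` -/
def littleJacobi (n : ℕ) (A B x : ℝ) : ℝ :=
  ∑ k ∈ Finset.range (n + 1),
    pochN q (q ^ (-(n : ℝ))) k * pochN q (q ^ (A + B + (n : ℝ) + 1)) k /
      (pochN q (q ^ (A + 1)) k * pochN q q k) * (q * x) ^ k

end QFrac

/-!
On the grid `x_n = a q^n` every quantity is a series. Put `d_n = f(x_n) - f(x_{n+1})` and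
`F_m = (I^{1-α}_{q,a^-} g)(x_m)`. Unfolding the Caputo derivative, the left-hand side is the double
series `∑_n ∑_k A_n c_k d_{n+k}` with `A_n = q^n x_n^{-α} g(x_n)` and `c_k = (q^{k+1};q)_{-α}`;
summed along antidiagonals it becomes `∑_m d_m F_m`, because `(q^{-i};q)_∞ = 0` for `i ≥ 0` cuts
the right integral at a grid point down to the finite convolution `F_m ∝ ∑_{i+j=m} A_i c_j`.
The series converges absolutely since `∑ |d_n|` is the q-variation of `f`, `g` is bounded, and
`0 ≤ c_k ≤ 1/(q^{1-α};q)_∞`. On the other side, `(1-q) x_n D^α_{q,a^-} g(x_n) = F_n - F_{n-1}` with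
`F_{-1} = (I^{1-α}_{q,a^-} g)(a/q)`, and summation by parts turns `∑_n f(x_n)(F_n - F_{n-1})` into
`∑_m d_m F_m` plus the two boundary terms.
-/

open Real Finset

theorem Summable.tsum_eq_tsum_sum_antidiagonal {α : Type*} [AddCommMonoid α] [TopologicalSpace α]
    [ContinuousAdd α] [T3Space α] {F : ℕ × ℕ → α} (hF : Summable F) :
    ∑' p, F p = ∑' n, ∑ p ∈ antidiagonal n, F p := by
  rw [← HasAntidiagonal.sigmaAntidiagonalEquivProd.tsum_eq]
  conv_rhs => congr; ext; rw [← sum_finset_coe, ← tsum_fintype (L := .unconditional _)]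
  exact (HasAntidiagonal.sigmaAntidiagonalEquivProd.summable_iff.mpr hF).tsum_sigma'
    (fun n ↦ (hasSum_fintype _).summable)

theorem summable_mul_mul_add {A c d : ℕ → ℝ} {M : ℝ} (hA : Summable fun n => |A n|)
    (hd : Summable fun n => |d n|) (hc : ∀ k, |c k| ≤ M) :
    Summable fun p : ℕ × ℕ => A p.1 * c p.2 * d (p.1 + p.2) := by
  have hprod : Summable fun p : ℕ × ℕ => |A p.1| * |d p.2| :=
    hA.mul_of_nonneg hd (fun _ => abs_nonneg _) (fun _ => abs_nonneg _)
  have hinj : Function.Injective fun p : ℕ × ℕ => (p.1, p.1 + p.2) := by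
    intro p p' h
    simp only [Prod.mk.injEq] at h
    exact Prod.ext h.1 (by omega)
  refine Summable.of_norm_bounded ((hprod.comp_injective hinj).mul_left M) fun p => ?_
  simp only [Function.comp_apply, Real.norm_eq_abs, abs_mul]
  calc |A p.1| * |c p.2| * |d (p.1 + p.2)| ≤ |A p.1| * M * |d (p.1 + p.2)| := by
        gcongr
        exact hc p.2
    _ = M * (|A p.1| * |d (p.1 + p.2)|) := by ring

theorem summable_mul_of_bdd {u v : ℕ → ℝ} {C : ℝ} (hu : Summable fun n => |u n|)
    (hv : ∀ n, |v n| ≤ C) : Summable fun n => u n * v n :=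
  Summable.of_norm_bounded (hu.mul_right C) fun n => by
    rw [Real.norm_eq_abs, abs_mul]
    exact mul_le_mul_of_nonneg_left (hv n) (abs_nonneg _)

theorem summable_mul_of_tendsto {u v : ℕ → ℝ} {L : ℝ} (hu : Summable fun n => |u n|)
    (hv : Tendsto v atTop (nhds L)) : Summable fun n => u n * v n := by
  obtain ⟨C, hC⟩ := hv.abs.bddAbove_range
  exact summable_mul_of_bdd hu fun n => hC ⟨n, rfl⟩

theorem tsum_mul_sub_eq_of_tendsto {R : Type*} [CommRing R] [TopologicalSpace R]
    [IsTopologicalRing R] [T2Space R] {u G : ℕ → R} {U L : R}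
    (hu : Tendsto u atTop (nhds U)) (hG : Tendsto G atTop (nhds L))
    (h₁ : Summable fun n => u n * (G (n + 1) - G n))
    (h₂ : Summable fun n => (u n - u (n + 1)) * G (n + 1)) :
    ∑' n, u n * (G (n + 1) - G n) = U * L - u 0 * G 0 + ∑' n, (u n - u (n + 1)) * G (n + 1) := by
  have hpartial : ∀ N, ∑ n ∈ range N, u n * (G (n + 1) - G n) =
      u N * G N - u 0 * G 0 + ∑ n ∈ range N, (u n - u (n + 1)) * G (n + 1) := by
    intro N
    induction N with
    | zero => simp
    | succ N ih => rw [sum_range_succ, ih, sum_range_succ]; ring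
  refine tendsto_nhds_unique (h₁.hasSum.tendsto_sum_nat) ?_
  simp_rw [hpartial]
  exact ((hu.mul hG).sub_const _).add h₂.hasSum.tendsto_sum_nat

theorem summable_log_one_sub_mul_pow {q : ℝ} (hq0 : 0 ≤ q) (hq1 : q < 1) (z : ℝ) :
    Summable fun n : ℕ => log (1 - z * q ^ n) := by
  simpa [sub_eq_add_neg] using
    Real.summable_log_one_add_of_summable ((summable_geometric_of_lt_one hq0 hq1).mul_left (-z))

theorem mul_pow_lt_one {q : ℝ} (hq0 : 0 ≤ q) (hq1 : q ≤ 1) {z : ℝ} (hz : z < 1) (n : ℕ) :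
    z * q ^ n < 1 := by
  have h0 : 0 ≤ q ^ n := pow_nonneg hq0 n
  have h1 : q ^ n ≤ 1 := pow_le_one₀ hq0 hq1
  rcases le_total 0 z with hz0 | hz0 <;> nlinarith

namespace QFrac

variable {q a : ℝ}

theorem pochInf_eq_exp_tsum_log (hq0 : 0 ≤ q) (hq1 : q < 1) {z : ℝ} (hz : z < 1) :
    pochInf q z = exp (∑' n : ℕ, log (1 - z * q ^ n)) :=
  (rexp_tsum_eq_tprod (fun n => sub_pos.2 (mul_pow_lt_one hq0 hq1.le hz n))
    (summable_log_one_sub_mul_pow hq0 hq1 z)).symm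

theorem pochInf_pos (hq0 : 0 ≤ q) (hq1 : q < 1) {z : ℝ} (hz : z < 1) : 0 < pochInf q z := by
  rw [pochInf_eq_exp_tsum_log hq0 hq1 hz]
  exact exp_pos _

theorem pochInf_le_pochInf (hq0 : 0 ≤ q) (hq1 : q < 1) {z w : ℝ} (hzw : z ≤ w) (hw : w < 1) :
    pochInf q w ≤ pochInf q z := by
  rw [pochInf_eq_exp_tsum_log hq0 hq1 hw, pochInf_eq_exp_tsum_log hq0 hq1 (hzw.trans_lt hw)]
  refine exp_le_exp.2 (Summable.tsum_le_tsum (fun n => ?_)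
    (summable_log_one_sub_mul_pow hq0 hq1 w) (summable_log_one_sub_mul_pow hq0 hq1 z))
  refine log_le_log (sub_pos.2 (mul_pow_lt_one hq0 hq1.le hw n)) ?_
  nlinarith [pow_nonneg hq0 n]

theorem pochInf_zero : pochInf q 0 = 1 := by
  simp [pochInf]

theorem pochInf_le_one (hq0 : 0 ≤ q) (hq1 : q < 1) {z : ℝ} (hz0 : 0 ≤ z) (hz1 : z < 1) :
    pochInf q z ≤ 1 :=
  pochInf_zero (q := q) ▸ pochInf_le_pochInf hq0 hq1 hz0 hz1

theorem pochInf_eq_zero_of_mul_pow_eq_one {z : ℝ} {r : ℕ} (hz : z * q ^ r = 1) :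
    pochInf q z = 0 :=
  tprod_of_exists_eq_zero ⟨r, by rw [hz, sub_self]⟩

def gridDiff (q a : ℝ) (f : ℝ → ℝ) (n : ℕ) : ℝ := f (a * q ^ n) - f (a * q ^ (n + 1))

def fracKernel (q β : ℝ) (k : ℕ) : ℝ := poch q (q ^ (k + 1)) (β - 1)

theorem qACvar.summable_abs_gridDiff {f : ℝ → ℝ} (hf : qACvar q a f) :
    Summable fun n => |gridDiff q a f n| := by
  obtain ⟨K, hK⟩ := hf
  exact summable_of_sum_range_le (fun n => abs_nonneg _) fun N => by
    simpa [gridDiff] using hK 0 N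

theorem abs_fracKernel_le (hq : 0 < q) (hq1 : q < 1) {β : ℝ} (hβ : 0 < β) (k : ℕ) :
    |fracKernel q β k| ≤ (pochInf q (q ^ β))⁻¹ := by
  have hqk : q ^ (k + 1) < 1 := pow_lt_one₀ hq.le hq1 (Nat.succ_ne_zero k)
  have hqβ : q ^ β < 1 := rpow_lt_one hq.le hq1 hβ
  have harg : q ^ (k + 1) * q ^ (β - 1) = q ^ ((k : ℝ) + β) := by
    rw [← rpow_natCast, ← rpow_add hq]
    push_cast
    ring_nf
  have hle : q ^ ((k : ℝ) + β) ≤ q ^ β :=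
    rpow_le_rpow_of_exponent_ge hq hq1.le (by linarith [k.cast_nonneg (α := ℝ)])
  have hden : pochInf q (q ^ β) ≤ pochInf q (q ^ ((k : ℝ) + β)) :=
    pochInf_le_pochInf hq.le hq1 hle hqβ
  have hden0 : 0 < pochInf q (q ^ β) := pochInf_pos hq.le hq1 hqβ
  rw [fracKernel, poch, harg, abs_div, abs_of_pos (pochInf_pos hq.le hq1 hqk),
    abs_of_pos (hden0.trans_le hden), ← one_div]
  exact div_le_div₀ zero_le_one (pochInf_le_one hq.le hq1 (by positivity) hqk) hden0 hden

theorem poch_eq_zero_of_mul_pow_eq_one {z : ℝ} {r : ℕ} (hz : z * q ^ r = 1) (ν : ℝ) :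
    poch q z ν = 0 := by
  rw [poch, pochInf_eq_zero_of_mul_pow_eq_one hz, zero_div]

theorem poch_grid_ratio (hq : q ≠ 0) (ha : a ≠ 0) (m j : ℕ) (ν : ℝ) :
    poch q (q * (a * q ^ m) / (a * q ^ j)) ν = if j ≤ m then poch q (q ^ (m - j + 1)) ν else 0 := by
  split_ifs with hj
  · congr 1
    rw [show m - j + 1 = (m + 1) - j by omega, pow_sub₀ _ hq (by omega), pow_succ]
    field_simp
  · apply poch_eq_zero_of_mul_pow_eq_one (r := j - (m + 1))
    rw [pow_sub₀ _ hq (by omega), pow_succ]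
    field_simp

theorem CDleft_apply_grid (hq0 : q ≠ 0) (hq1 : q ≠ 1) (ha : a ≠ 0) (α : ℝ) (f : ℝ → ℝ)
    (n : ℕ) :
    CDleft q α f (a * q ^ n) = (a * q ^ n) ^ (1 - α - 1) / qGamma q (1 - α) *
      ∑' k, fracKernel q (1 - α) k * gridDiff q a f (n + k) := by
  have h1q : 1 - q ≠ 0 := sub_ne_zero.2 hq1.symm
  rw [CDleft, Ileft, jackson, ← tsum_mul_left]
  congr 1
  refine tsum_congr fun k => ?_
  have hx : a * q ^ (n + k) ≠ 0 := by positivity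
  rw [show q * (a * q ^ n * q ^ k) / (a * q ^ n) = q ^ (k + 1) by field_simp; ring,
    show a * q ^ n * q ^ k = a * q ^ (n + k) by ring, Dq,
    show q * (a * q ^ (n + k)) = a * q ^ (n + k + 1) by ring, fracKernel, gridDiff]
  field_simp
  ring

theorem Iright_apply_grid (hq0 : q ≠ 0) (ha : a ≠ 0) (β : ℝ) (g : ℝ → ℝ) (m : ℕ) :
    Iright q a β g (a * q ^ m) = (qGamma q β)⁻¹ * ((1 - q) * a *
      ∑ p ∈ antidiagonal m,
        q ^ p.1 * (a * q ^ p.1) ^ (β - 1) * g (a * q ^ p.1) * fracKernel q β p.2) := by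
  have hlow : ∀ i : ℕ, q * (a * q ^ m) * q ^ i = a * q ^ (m + 1 + i) := fun i => by ring
  have hbeyond : ∀ i : ℕ, ¬ m + 1 + i ≤ m := fun i => by omega
  simp only [Iright, jacksonI, jackson, hlow, poch_grid_ratio hq0 ha, hbeyond, if_false,
    mul_zero, zero_mul, tsum_zero, sub_zero]
  rw [Nat.sum_antidiagonal_eq_sum_range_succ_mk, tsum_eq_sum (s := range (m + 1))]
  swap
  · intro j hj
    rw [if_neg (by simpa [Nat.lt_succ_iff] using hj)]
    ring
  congr 2
  refine Finset.sum_congr rfl fun j hj => ?_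
  rw [if_pos (by simpa [Nat.lt_succ_iff] using hj), fracKernel]
  ring

theorem pow_mul_rpow_grid (hq : 0 < q) (ha : 0 < a) (β : ℝ) (n : ℕ) :
    q ^ n * (a * q ^ n) ^ (β - 1) = a ^ (β - 1) * (q ^ β) ^ n := by
  rw [mul_rpow ha.le (pow_nonneg hq.le n), ← rpow_natCast q n, ← rpow_mul hq.le,
    ← rpow_natCast (q ^ β) n, ← rpow_mul hq.le, mul_left_comm, ← rpow_add hq]
  ring_nf

theorem summable_pow_mul_rpow_grid (hq : 0 < q) (hq1 : q < 1) (ha : 0 < a) {β : ℝ}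
    (hβ : 0 < β) : Summable fun n : ℕ => q ^ n * (a * q ^ n) ^ (β - 1) := by
  simp_rw [pow_mul_rpow_grid hq ha]
  exact (summable_geometric_of_lt_one (rpow_nonneg hq.le β) (rpow_lt_one hq.le hq1 hβ)).mul_left _

theorem jackson_mul_CDleft_eq_tsum (hq : 0 < q) (hq1 : q < 1) (ha : 0 < a) {α : ℝ}
    (hα : α < 1) {f g : ℝ → ℝ} {C : ℝ} (hg : ∀ n : ℕ, |g (a * q ^ n)| ≤ C)
    (hf : Summable fun n => |gridDiff q a f n|) :
    jackson q a (fun x => g x * CDleft q α f x) =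
      ∑' m, gridDiff q a f m * Iright q a (1 - α) g (a * q ^ m) := by
  set c := fracKernel q (1 - α)
  set d := gridDiff q a f
  set A : ℕ → ℝ := fun n => q ^ n * (a * q ^ n) ^ (1 - α - 1) * g (a * q ^ n)
  have hA : Summable fun n => |A n| :=
    (summable_mul_of_bdd (summable_pow_mul_rpow_grid hq hq1 ha (sub_pos.2 hα)).abs hg).abs
  have hF : Summable fun p : ℕ × ℕ => A p.1 * c p.2 * d (p.1 + p.2) :=
    summable_mul_mul_add hA hf (abs_fracKernel_le hq hq1 (sub_pos.2 hα))
  calc jackson q a (fun x => g x * CDleft q α f x)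
      = (qGamma q (1 - α))⁻¹ * ((1 - q) * a * ∑' n, ∑' k, A n * c k * d (n + k)) := by
        simp_rw [jackson, CDleft_apply_grid hq.ne' hq1.ne ha.ne', ← tsum_mul_left]
        congr 1 with n
        congr 1 with k
        simp only [A, c, d]
        ring
    _ = (qGamma q (1 - α))⁻¹ *
          ((1 - q) * a * ∑' m, ∑ p ∈ antidiagonal m, A p.1 * c p.2 * d (p.1 + p.2)) := by
        rw [← hF.tsum_prod, hF.tsum_eq_tsum_sum_antidiagonal]
    _ = ∑' m, d m * Iright q a (1 - α) g (a * q ^ m) := by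
        simp_rw [Iright_apply_grid hq.ne' ha.ne', ← tsum_mul_left]
        congr 1 with m
        rw [mul_sum, mul_sum, mul_sum, mul_sum, mul_sum]
        refine Finset.sum_congr rfl fun p hp => ?_
        rw [mem_antidiagonal.1 hp]
        ring

theorem one_sub_mul_mul_DRLright (hq0 : q ≠ 0) (hq1 : q ≠ 1) {x : ℝ} (hx : x ≠ 0)
    (b α : ℝ) (g : ℝ → ℝ) :
    (1 - q) * x * DRLright q b α g x = Iright q b (1 - α) g x - Iright q b (1 - α) g (x / q) := by
  have h1q : q - 1 ≠ 0 := sub_ne_zero.2 hq1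
  rw [DRLright, Dqinv, inv_eq_one_div]
  field_simp
  ring

theorem hasSum_jackson_mul_DRLright (hq : 0 < q) (hq1 : q ≠ 1) (ha : a ≠ 0) {b α L : ℝ}
    {f g : ℝ → ℝ} (hf : Tendsto (fun n : ℕ => f (a * q ^ n)) atTop (nhds L))
    (hDg : MemL1 q a (DRLright q b α g)) :
    HasSum (fun n : ℕ => f (a * q ^ n) *
        (Iright q b (1 - α) g (a * q ^ n) - Iright q b (1 - α) g (a * q ^ n / q)))
      (jackson q a fun x => f x * DRLright q b α g x) := by
  have hterm : ∀ n : ℕ, f (a * q ^ n) *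
      (Iright q b (1 - α) g (a * q ^ n) - Iright q b (1 - α) g (a * q ^ n / q)) =
        (1 - q) * a * (q ^ n * (f (a * q ^ n) * DRLright q b α g (a * q ^ n))) := fun n => by
    rw [← one_sub_mul_mul_DRLright hq.ne' hq1 (by positivity)]
    ring
  have hDg' : Summable fun n : ℕ => |q ^ n * DRLright q b α g (a * q ^ n)| :=
    hDg.congr fun n => by rw [abs_mul, abs_of_pos (pow_pos hq n)]
  have hs : Summable fun n : ℕ => q ^ n * (f (a * q ^ n) * DRLright q b α g (a * q ^ n)) :=
    (summable_mul_of_tendsto hDg' hf).congr fun n => by ring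
  simp_rw [hterm, jackson, ← tsum_mul_left]
  exact (hs.mul_left _).hasSum

end QFrac

theorem stmt13_general (q a α : ℝ) (hq : 0 < q) (hq1 : q < 1) (ha : 0 < a)
    (hα1 : α < 1) (f g : ℝ → ℝ)
    (hf : QFrac.qAC q a f)
    (hg : ∃ C : ℝ, (∀ n : ℕ, |g (a * q ^ n)| ≤ C) ∧ |g 0| ≤ C)
    (hDg : QFrac.MemL1 q a (QFrac.DRLright q a α g)) (Ig0 : ℝ)
    (hlim : Filter.Tendsto (fun n : ℕ => QFrac.Iright q a (1 - α) g (a * q ^ n / q))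
      Filter.atTop (nhds Ig0)) :
    QFrac.jackson q a (fun x => g x * QFrac.CDleft q α f x) =
      (QFrac.Iright q a (1 - α) g (a / q) * f a - Ig0 * f 0) +
        QFrac.jackson q a (fun x => f x * QFrac.DRLright q a α g x) := by
  obtain ⟨hreg, hvar⟩ := hf
  obtain ⟨C, hgC, -⟩ := hg
  set G : ℕ → ℝ := fun n => QFrac.Iright q a (1 - α) g (a * q ^ n / q)
  have hG : ∀ n : ℕ, QFrac.Iright q a (1 - α) g (a * q ^ n) = G (n + 1) := fun n => by
    simp only [G]
    rw [pow_succ, ← mul_assoc, mul_div_cancel_right₀ _ hq.ne']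
  have hd := hvar.summable_abs_gridDiff
  have hR := QFrac.hasSum_jackson_mul_DRLright hq hq1.ne ha.ne' hreg hDg
  simp_rw [hG] at hR
  rw [QFrac.jackson_mul_CDleft_eq_tsum hq hq1 ha hα1 hgC hd, ← hR.tsum_eq,
    tsum_mul_sub_eq_of_tendsto hreg hlim hR.summable
      (summable_mul_of_tendsto hd (hlim.comp (tendsto_add_atTop_nat 1)))]
  have hG0 : G 0 = QFrac.Iright q a (1 - α) g (a / q) := by simp only [G, pow_zero, mul_one]
  simp_rw [hG, hG0, pow_zero, mul_one, QFrac.gridDiff]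
  ring

/-- integration by parts for the left Caputo q-derivative and the
right Riemann–Liouville q-derivative; `Ig0 = (I^{1-α}_{q,a^-}g)(x/q)|_{x=0}`
is the q-regular value at zero. -/
theorem stmt13 (q a α : ℝ) (hq : 0 < q) (hq1 : q < 1) (ha : 0 < a)
    (hα0 : 0 < α) (hα1 : α < 1) (f g : ℝ → ℝ)
    (hf : QFrac.qAC q a f)
    (hg : ∃ C : ℝ, (∀ n : ℕ, |g (a * q ^ n)| ≤ C) ∧ |g 0| ≤ C)
    (hDg : QFrac.MemL1 q a (QFrac.DRLright q a α g)) (Ig0 : ℝ)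
    (hlim : Filter.Tendsto (fun n : ℕ => QFrac.Iright q a (1 - α) g (a * q ^ n / q))
      Filter.atTop (nhds Ig0)) :
    QFrac.jackson q a (fun x => g x * QFrac.CDleft q α f x) =
      (QFrac.Iright q a (1 - α) g (a / q) * f a - Ig0 * f 0) +
        QFrac.jackson q a (fun x => f x * QFrac.DRLright q a α g x) :=
  stmt13_general q a α hq hq1 ha hα1 f g hf hg hDg Ig0 hlim
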